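/- Let c ∈ ℝ, σ > 0, B ≥ 0, and let X be distributed according to the Gaussian measure on ℝ with mean c and variance σ². Then E[e^{−B·max(X,0)²}] = e^{−Bc²/(2σ²B + 1)}/√(2σ²B + 1) · Φ( c/(σ·√(2σ²B + 1)) ) + Φ(−c/σ), where Φ is the standard normal cumulative distribution function. -/

import Mathlib

/-! Split the expectation at `0`. On `x ≤ 0` the integrand is `1`, which leaves `P(X ≤ 0) = Φ(-c/σ)`.
On `x > 0`, multiplying the density of `N(c, σ²)` by `e^{-Bx²}` and completing the square gives
`e^{-Bc²/k}/√k` times the density of `N(c/k, σ²/k)`, `k = 2σ²B + 1`, whose mass on `(0, ∞)` is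
`Φ(c/(σ√k))`. -/

open MeasureTheory ProbabilityTheory

/-- The standard normal cumulative distribution function. -/
noncomputable def stdGaussCDF (t : ℝ) : ℝ :=
  ∫ s in Set.Iic t, Real.exp (-s ^ 2 / 2) / Real.sqrt (2 * Real.pi)

open Real Set
open scoped NNReal

lemma stdGaussCDF_eq_gaussianReal_real_Iic (t : ℝ) :
    stdGaussCDF t = (gaussianReal 0 1).real (Iic t) := by
  rw [measureReal_def, gaussianReal_apply_eq_integral 0 one_ne_zero,
    ENNReal.toReal_ofReal (integral_nonneg (gaussianPDFReal_nonneg 0 1))]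
  refine setIntegral_congr_fun measurableSet_Iic fun s _ => ?_
  simp [gaussianPDFReal, div_eq_mul_inv, mul_comm]

lemma gaussianReal_zero_one_real_Ioi (t : ℝ) :
    (gaussianReal 0 1).real (Ioi t) = stdGaussCDF (-t) := by
  have := nullSingletonClass_gaussianReal (μ := 0) one_ne_zero
  calc (gaussianReal 0 1).real (Ioi t)
      = ((gaussianReal 0 1).map (fun x => -x)).real (Ioi t) := by
        rw [gaussianReal_map_neg, neg_zero]
    _ = (gaussianReal 0 1).real (Iio (-t)) := by
        rw [map_measureReal_apply measurable_neg measurableSet_Ioi]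
        exact congrArg _ (neg_Ioi t)
    _ = stdGaussCDF (-t) := by
        rw [measureReal_congr Iio_ae_eq_Iic, stdGaussCDF_eq_gaussianReal_real_Iic]

lemma gaussianReal_map_standardize (m : ℝ) {v : ℝ≥0} (hv : v ≠ 0) :
    (gaussianReal m v).map (fun x => (x - m) / √v) = gaussianReal 0 1 := by
  rw [show (fun x => (x - m) / √v) = (· / √(v : ℝ)) ∘ (· - m) from rfl,
    ← Measure.map_map (measurable_div_const _) (measurable_sub_const m),
    gaussianReal_map_sub_const, gaussianReal_map_div_const, sub_self, zero_div]
  congr 1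
  ext
  simp [hv]

lemma gaussianReal_real_Iic (m : ℝ) {v : ℝ≥0} (hv : v ≠ 0) (a : ℝ) :
    (gaussianReal m v).real (Iic a) = stdGaussCDF ((a - m) / √v) := by
  have hpre : (fun x => (x - m) / √v) ⁻¹' Iic ((a - m) / √v) = Iic a := by
    ext x
    simp [div_le_div_iff_of_pos_right (Real.sqrt_pos.2 (NNReal.coe_pos.2 (pos_iff_ne_zero.2 hv)))]
  rw [stdGaussCDF_eq_gaussianReal_real_Iic, ← gaussianReal_map_standardize m hv,
    map_measureReal_apply (by fun_prop) measurableSet_Iic, hpre]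

lemma gaussianReal_real_Ioi (m : ℝ) {v : ℝ≥0} (hv : v ≠ 0) (a : ℝ) :
    (gaussianReal m v).real (Ioi a) = stdGaussCDF ((m - a) / √v) := by
  have hpre : (fun x => (x - m) / √v) ⁻¹' Ioi ((a - m) / √v) = Ioi a := by
    ext x
    simp [div_lt_div_iff_of_pos_right (Real.sqrt_pos.2 (NNReal.coe_pos.2 (pos_iff_ne_zero.2 hv)))]
  rw [← neg_sub, neg_div, ← gaussianReal_zero_one_real_Ioi, ← gaussianReal_map_standardize m hv,
    map_measureReal_apply (by fun_prop) measurableSet_Ioi, hpre]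

lemma setIntegral_gaussianReal_eq_setIntegral_mul {m : ℝ} {v : ℝ≥0} (hv : v ≠ 0) (f : ℝ → ℝ)
    {s : Set ℝ} (hs : MeasurableSet s) :
    ∫ x in s, f x ∂gaussianReal m v = ∫ x in s, gaussianPDFReal m v x * f x := by
  rw [gaussianReal_of_var_ne_zero m hv, gaussianPDF_def,
    setIntegral_withDensity_eq_setIntegral_toReal_smul' s (by fun_prop)
      (ae_of_all _ fun _ => ENNReal.ofReal_lt_top)]
  refine setIntegral_congr_fun hs fun x _ => ?_
  rw [ENNReal.toReal_ofReal (gaussianPDFReal_nonneg m v x), smul_eq_mul]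

lemma gaussianReal_real_eq_setIntegral (m : ℝ) {v : ℝ≥0} (hv : v ≠ 0) {s : Set ℝ}
    (hs : MeasurableSet s) :
    (gaussianReal m v).real s = ∫ x in s, gaussianPDFReal m v x := by
  simpa using (setIntegral_gaussianReal_eq_setIntegral_mul hv (fun _ => 1) hs (m := m))

lemma gaussianPDFReal_mul_exp_neg_mul_sq (m : ℝ) {v : ℝ≥0} (hv : v ≠ 0) {B : ℝ}
    (hk : 0 < 2 * v * B + 1) (x : ℝ) :
    gaussianPDFReal m v x * exp (-B * x ^ 2) =
      exp (-B * m ^ 2 / (2 * v * B + 1)) / √(2 * v * B + 1) *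
        gaussianPDFReal (m / (2 * v * B + 1)) (v / (2 * v * B + 1).toNNReal) x := by
  set k := 2 * (v : ℝ) * B + 1 with hk_def
  have hcoe : ((v / k.toNNReal : ℝ≥0) : ℝ) = v / k := by simp [hk.le]
  have hexp : -(x - m) ^ 2 / (2 * v) + -B * x ^ 2 =
      -B * m ^ 2 / k + -(x - m / k) ^ 2 / (2 * (v / k)) := by
    field_simp
    rw [hk_def]
    ring
  simp only [gaussianPDFReal, hcoe]
  rw [show 2 * π * (v / k) = 2 * π * v / k by ring, Real.sqrt_div' _ hk.le, mul_assoc,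
    ← exp_add, hexp, exp_add]
  have : 0 < √k := Real.sqrt_pos.2 hk
  field_simp

lemma setIntegral_exp_neg_mul_sq_gaussianReal (m : ℝ) {v : ℝ≥0} (hv : v ≠ 0) {B : ℝ}
    (hk : 0 < 2 * v * B + 1) {s : Set ℝ} (hs : MeasurableSet s) :
    ∫ x in s, exp (-B * x ^ 2) ∂gaussianReal m v =
      exp (-B * m ^ 2 / (2 * v * B + 1)) / √(2 * v * B + 1) *
        (gaussianReal (m / (2 * v * B + 1)) (v / (2 * v * B + 1).toNNReal)).real s := by
  have hvk : v / (2 * v * B + 1).toNNReal ≠ 0 := div_ne_zero hv (by simpa using hk)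
  rw [setIntegral_gaussianReal_eq_setIntegral_mul hv _ hs,
    setIntegral_congr_fun hs fun x _ => gaussianPDFReal_mul_exp_neg_mul_sq m hv hk x,
    integral_const_mul, gaussianReal_real_eq_setIntegral _ hvk hs]

/-- For `X ~ N(c, σ²)` and `B ≥ 0`,
`E[e^{-B max(X,0)²}] = e^{-Bc²/(2σ²B+1)}/√(2σ²B+1) · Φ(c/(σ√(2σ²B+1))) + Φ(-c/σ)`. -/
theorem gaussian_exp_neg_sq_plus_moment (c σ B : ℝ) (hσ : 0 < σ) (hB : 0 ≤ B) :
    (∫ x, Real.exp (-B * max x 0 ^ 2) ∂(gaussianReal c ⟨σ ^ 2, sq_nonneg σ⟩)) =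
      Real.exp (-B * c ^ 2 / (2 * σ ^ 2 * B + 1)) / Real.sqrt (2 * σ ^ 2 * B + 1) *
          stdGaussCDF (c / (σ * Real.sqrt (2 * σ ^ 2 * B + 1))) +
        stdGaussCDF (-c / σ) := by
  set v : ℝ≥0 := ⟨σ ^ 2, sq_nonneg σ⟩
  set k := 2 * σ ^ 2 * B + 1
  have hvk : 2 * (v : ℝ) * B + 1 = k := rfl
  have hv : v ≠ 0 := NNReal.coe_ne_zero.1 (pow_pos hσ 2).ne'
  have hk : 0 < k := by positivity
  have hsqrt_v : √(v : ℝ) = σ := Real.sqrt_sq hσ.le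
  have hint : Integrable (fun x => exp (-B * max x 0 ^ 2)) (gaussianReal c v) :=
    Integrable.of_bound (by fun_prop) 1 (ae_of_all _ fun x => by
      rw [Real.norm_of_nonneg (exp_nonneg _), exp_le_one_iff]
      nlinarith [sq_nonneg (max x 0)])
  have hIic : ∫ x in Iic 0, exp (-B * max x 0 ^ 2) ∂gaussianReal c v = stdGaussCDF (-c / σ) := by
    rw [setIntegral_congr_fun measurableSet_Iic
        fun x (hx : x ≤ 0) => show exp (-B * max x 0 ^ 2) = 1 by simp [hx],
      setIntegral_const, smul_eq_mul, mul_one, gaussianReal_real_Iic c hv, hsqrt_v, zero_sub]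
  have harg : (c / k - 0) / √((v / k.toNNReal : ℝ≥0) : ℝ) = c / (σ * √k) := by
    rw [NNReal.coe_div, Real.coe_toNNReal _ hk.le, Real.sqrt_div' _ hk.le, hsqrt_v, sub_zero]
    have := Real.sqrt_pos.2 hk
    field_simp
    rw [Real.sq_sqrt hk.le]
  have hIoi : ∫ x in Ioi 0, exp (-B * max x 0 ^ 2) ∂gaussianReal c v =
      exp (-B * c ^ 2 / k) / √k * stdGaussCDF (c / (σ * √k)) := by
    rw [setIntegral_congr_fun measurableSet_Ioi fun x (hx : 0 < x) => by rw [max_eq_left hx.le],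
      setIntegral_exp_neg_mul_sq_gaussianReal c hv (hvk ▸ hk) measurableSet_Ioi, hvk,
      gaussianReal_real_Ioi _ (div_ne_zero hv (by simpa using hk)), harg]
  rw [← intervalIntegral.integral_Iic_add_Ioi hint.integrableOn hint.integrableOn, hIic, hIoi,
    add_comm]
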